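/- (Finite-horizon approximation.) Suppose μ := σ_min(Σ₀) > 0 and K is a stabilizing gain. For a positive integer ℓ define Σ_K^{(ℓ)} := ∑_{t=0}^{ℓ−1} (A−BK)^t Σ₀ ((A−BK)^⊤)^t and C^{(ℓ)}(K) := Tr(Σ_K^{(ℓ)} (Q + K^⊤RK)). Then for every ε > 0: (i) if ℓ ≥ d·C(K)² / (ε μ σ_min(Q)²), then ‖Σ_K^{(ℓ)} − Σ_K‖ ≤ ε; and (ii) if ℓ ≥ d·C(K)² (‖Q‖ + ‖R‖‖K‖²) / (ε μ σ_min(Q)²), then C(K) ≥ C^{(ℓ)}(K) ≥ C(K) − ε. -/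

import Mathlib

open Matrix

noncomputable section

/-- Spectral radius of a real square matrix: the supremum of the absolute values of its
complex eigenvalues. -/
def specRad {d : ℕ} (M : Matrix (Fin d) (Fin d) ℝ) : ℝ :=
  ⨆ μ : spectrum ℂ (M.map (algebraMap ℝ ℂ)), ‖(μ : ℂ)‖

/-- Minimum singular value of a real matrix. -/
def sigmaMin {m n : ℕ} (M : Matrix (Fin m) (Fin n) ℝ) : ℝ :=
  Real.sqrt (⨅ i, (Matrix.isHermitian_conjTranspose_mul_self M).eigenvalues i)

/-- Spectral norm (maximum singular value) of a real matrix. -/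
def specNorm {m n : ℕ} (M : Matrix (Fin m) (Fin n) ℝ) : ℝ :=
  Real.sqrt (⨆ i, (Matrix.isHermitian_conjTranspose_mul_self M).eigenvalues i)

/-- Frobenius norm of a real matrix. -/
def frobNorm {m n : ℕ} (M : Matrix (Fin m) (Fin n) ℝ) : ℝ :=
  Real.sqrt (∑ i, ∑ j, (M i j) ^ 2)

/-- For a stabilizing gain `K`, the unique positive semidefinite solution `P_K` of
`P = Q + Kᵀ R K + (A - B K)ᵀ P (A - B K)`, given by its convergent series representation. -/
def Pmat {d k : ℕ} (A : Matrix (Fin d) (Fin d) ℝ) (B : Matrix (Fin d) (Fin k) ℝ)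
    (Q : Matrix (Fin d) (Fin d) ℝ) (R : Matrix (Fin k) (Fin k) ℝ)
    (K : Matrix (Fin k) (Fin d) ℝ) : Matrix (Fin d) (Fin d) ℝ :=
  ∑' t : ℕ, ((A - B * K)ᵀ) ^ t * (Q + Kᵀ * R * K) * (A - B * K) ^ t

/-- The state correlation matrix `Σ_K = ∑_{t} (A-BK)^t Σ₀ ((A-BK)ᵀ)^t`. -/
def SigmaMat {d k : ℕ} (A : Matrix (Fin d) (Fin d) ℝ) (B : Matrix (Fin d) (Fin k) ℝ)
    (Sig0 : Matrix (Fin d) (Fin d) ℝ) (K : Matrix (Fin k) (Fin d) ℝ) :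
    Matrix (Fin d) (Fin d) ℝ :=
  ∑' t : ℕ, (A - B * K) ^ t * Sig0 * ((A - B * K)ᵀ) ^ t

/-- The LQR cost `C(K) = Tr(Σ₀ P_K)`. -/
def Cost {d k : ℕ} (A : Matrix (Fin d) (Fin d) ℝ) (B : Matrix (Fin d) (Fin k) ℝ)
    (Q : Matrix (Fin d) (Fin d) ℝ) (R : Matrix (Fin k) (Fin k) ℝ)
    (Sig0 : Matrix (Fin d) (Fin d) ℝ) (K : Matrix (Fin k) (Fin d) ℝ) : ℝ :=
  (Sig0 * Pmat A B Q R K).trace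

/-- `E_K = (R + Bᵀ P_K B) K - Bᵀ P_K A`. -/
def Emat {d k : ℕ} (A : Matrix (Fin d) (Fin d) ℝ) (B : Matrix (Fin d) (Fin k) ℝ)
    (Q : Matrix (Fin d) (Fin d) ℝ) (R : Matrix (Fin k) (Fin k) ℝ)
    (K : Matrix (Fin k) (Fin d) ℝ) : Matrix (Fin k) (Fin d) ℝ :=
  (R + Bᵀ * Pmat A B Q R K * B) * K - Bᵀ * Pmat A B Q R K * A

set_option linter.unusedSectionVars false
set_option maxHeartbeats 1000000

section PsdSqrt
open scoped MatrixOrder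

def _root_.Matrix.PosSemidef.sqrt {n : Type*} [Fintype n] [DecidableEq n] {X : Matrix n n ℝ}
    (_hX : X.PosSemidef) : Matrix n n ℝ := CFC.sqrt X

lemma _root_.Matrix.PosSemidef.posSemidef_sqrt {n : Type*} [Fintype n] [DecidableEq n]
    {X : Matrix n n ℝ} (hX : X.PosSemidef) : hX.sqrt.PosSemidef :=
  (CFC.sqrt_nonneg X).posSemidef

lemma _root_.Matrix.PosSemidef.sqrt_mul_self {n : Type*} [Fintype n] [DecidableEq n]
    {X : Matrix n n ℝ} (hX : X.PosSemidef) : hX.sqrt * hX.sqrt = X :=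
  CFC.sqrt_mul_sqrt_self X hX.nonneg

end PsdSqrt

namespace LQRaux

variable {n : Type*} [Fintype n] [DecidableEq n]

lemma posSemidef_of_isEmpty [IsEmpty n] (X : Matrix n n ℝ) : X.PosSemidef := by
  refine Matrix.PosSemidef.of_dotProduct_mulVec_nonneg ?_ ?_
  · ext i j; exact isEmptyElim i
  · intro x; simp [dotProduct]

lemma psd_smul {X : Matrix n n ℝ} (hX : X.PosSemidef) {c : ℝ} (hc : 0 ≤ c) :
    (c • X).PosSemidef := by
  refine Matrix.PosSemidef.of_dotProduct_mulVec_nonneg ?_ ?_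
  · have h1 := hX.1
    rw [Matrix.IsHermitian, conjTranspose_smul, h1]
    simp
  · intro x
    have := hX.dotProduct_mulVec_nonneg x
    simp only [Matrix.smul_mulVec, dotProduct_smul, smul_eq_mul]
    exact mul_nonneg hc this

lemma trace_nonneg_of_psd {X : Matrix n n ℝ} (hX : X.PosSemidef) : 0 ≤ X.trace := by
  rw [Matrix.trace]
  apply Finset.sum_nonneg
  intro i _
  have := hX.dotProduct_mulVec_nonneg (Pi.single i 1)
  simpa [Matrix.diag, Matrix.mulVec_single, Pi.single_apply, dotProduct] using this

lemma trace_mul_nonneg {X Y : Matrix n n ℝ} (hX : X.PosSemidef) (hY : Y.PosSemidef) :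
    0 ≤ (X * Y).trace := by
  have hs : hX.sqrt.PosSemidef := hX.posSemidef_sqrt
  have h2 : (hX.sqrt * Y * hX.sqrt).PosSemidef := by
    have := hY.mul_mul_conjTranspose_same hX.sqrt
    rwa [hs.1] at this
  have hXY : X * Y = hX.sqrt * (hX.sqrt * Y) := by rw [← mul_assoc, hX.sqrt_mul_self]
  rw [hXY, trace_mul_comm]
  exact trace_nonneg_of_psd h2

lemma trace_mul_le_of_psd {X W : Matrix n n ℝ} (hX : X.PosSemidef) {c : ℝ}
    (h : (c • (1 : Matrix n n ℝ) - W).PosSemidef) : (X * W).trace ≤ c * X.trace := by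
  have h0 := trace_mul_nonneg hX h
  have e : X * (c • (1 : Matrix n n ℝ) - W) = c • X - X * W := by
    rw [mul_sub, mul_smul_comm, mul_one]
  rw [e, trace_sub, trace_smul, smul_eq_mul] at h0
  linarith

lemma trace_mul_ge_of_psd {X W : Matrix n n ℝ} (hX : X.PosSemidef) {c : ℝ}
    (h : (W - c • (1 : Matrix n n ℝ)).PosSemidef) : c * X.trace ≤ (X * W).trace := by
  have h0 := trace_mul_nonneg hX h
  have e : X * (W - c • (1 : Matrix n n ℝ)) = X * W - c • X := by
    rw [mul_sub, mul_smul_comm, mul_one]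
  rw [e, trace_sub, trace_smul, smul_eq_mul] at h0
  linarith

end LQRaux

namespace LQRaux2

variable {n : Type*} [Fintype n] [DecidableEq n]

lemma dot_mulVec_eq {m : Type*} [Fintype m] (A : Matrix m n ℝ) (x : m → ℝ) (z : n → ℝ) :
    x ⬝ᵥ (A *ᵥ z) = (Aᵀ *ᵥ x) ⬝ᵥ z := by
  rw [dotProduct_mulVec, mulVec_transpose]

variable {H : Matrix n n ℝ}

lemma spectral_theorem_real (hH : H.IsHermitian) :
    H = (hH.eigenvectorUnitary : Matrix n n ℝ) * diagonal hH.eigenvalues *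
      star (hH.eigenvectorUnitary : Matrix n n ℝ) := by
  have h := hH.spectral_theorem
  simpa using h

lemma quadform_eq (hH : H.IsHermitian) (x : n → ℝ) :
    x ⬝ᵥ (H *ᵥ x) = ∑ i, hH.eigenvalues i *
      ((star (hH.eigenvectorUnitary : Matrix n n ℝ) *ᵥ x) i) ^ 2 := by
  set U := (hH.eigenvectorUnitary : Matrix n n ℝ) with hU
  set y := star U *ᵥ x with hy
  have key : ∀ z : n → ℝ, x ⬝ᵥ (U *ᵥ z) = y ⬝ᵥ z := by
    intro z
    rw [dot_mulVec_eq]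
    congr 1
  have h1 : H *ᵥ x = U *ᵥ (diagonal hH.eigenvalues *ᵥ y) := by
    conv_lhs => rw [spectral_theorem_real hH]
    rw [← hU, hy, mulVec_mulVec, mulVec_mulVec]
  rw [h1, key]
  simp only [dotProduct, mulVec_diagonal]
  exact Finset.sum_congr rfl fun i _ => by ring

lemma dot_self_eq (hH : H.IsHermitian) (x : n → ℝ) :
    x ⬝ᵥ x = ∑ i, ((star (hH.eigenvectorUnitary : Matrix n n ℝ) *ᵥ x) i) ^ 2 := by
  set U := (hH.eigenvectorUnitary : Matrix n n ℝ) with hU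
  set y := star U *ᵥ x with hy
  have key : ∀ z : n → ℝ, x ⬝ᵥ (U *ᵥ z) = y ⬝ᵥ z := by
    intro z
    rw [dot_mulVec_eq]
    congr 1
  have hU1 : U * star U = 1 := mem_unitaryGroup_iff.mp (hH.eigenvectorUnitary).2
  have hx : U *ᵥ y = x := by rw [hy, mulVec_mulVec, hU1, one_mulVec]
  calc x ⬝ᵥ x = x ⬝ᵥ (U *ᵥ y) := by rw [hx]
    _ = y ⬝ᵥ y := key _
    _ = ∑ i, (y i) ^ 2 := by simp [dotProduct, sq]

lemma quad_le (hH : H.IsHermitian) {c : ℝ} (hc : ∀ i, hH.eigenvalues i ≤ c) (x : n → ℝ) :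
    x ⬝ᵥ (H *ᵥ x) ≤ c * (x ⬝ᵥ x) := by
  rw [quadform_eq hH x, dot_self_eq hH x, Finset.mul_sum]
  exact Finset.sum_le_sum fun i _ => mul_le_mul_of_nonneg_right (hc i) (sq_nonneg _)

lemma quad_ge (hH : H.IsHermitian) {c : ℝ} (hc : ∀ i, c ≤ hH.eigenvalues i) (x : n → ℝ) :
    c * (x ⬝ᵥ x) ≤ x ⬝ᵥ (H *ᵥ x) := by
  rw [quadform_eq hH x, dot_self_eq hH x, Finset.mul_sum]
  exact Finset.sum_le_sum fun i _ => mul_le_mul_of_nonneg_right (hc i) (sq_nonneg _)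

lemma posSemidef_smul_one_sub (hH : H.IsHermitian) {c : ℝ}
    (h : ∀ x : n → ℝ, x ⬝ᵥ (H *ᵥ x) ≤ c * (x ⬝ᵥ x)) :
    (c • (1 : Matrix n n ℝ) - H).PosSemidef := by
  refine Matrix.PosSemidef.of_dotProduct_mulVec_nonneg ?_ ?_
  · rw [Matrix.IsHermitian, conjTranspose_sub, conjTranspose_smul, conjTranspose_one, hH]
    simp
  · intro x
    have := h x
    simp only [star_trivial, sub_mulVec, smul_mulVec, one_mulVec, dotProduct_sub,
      dotProduct_smul, smul_eq_mul]
    linarith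

lemma posSemidef_sub_smul_one (hH : H.IsHermitian) {c : ℝ}
    (h : ∀ x : n → ℝ, c * (x ⬝ᵥ x) ≤ x ⬝ᵥ (H *ᵥ x)) :
    (H - c • (1 : Matrix n n ℝ)).PosSemidef := by
  refine Matrix.PosSemidef.of_dotProduct_mulVec_nonneg ?_ ?_
  · rw [Matrix.IsHermitian, conjTranspose_sub, conjTranspose_smul, conjTranspose_one, hH]
    simp
  · intro x
    have := h x
    simp only [star_trivial, sub_mulVec, smul_mulVec, one_mulVec, dotProduct_sub,
      dotProduct_smul, smul_eq_mul]
    linarith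

lemma eigBasis_dot_self (hH : H.IsHermitian) (i : n) :
    (⇑(hH.eigenvectorBasis i) : n → ℝ) ⬝ᵥ ⇑(hH.eigenvectorBasis i) = 1 := by
  have h1 : ‖hH.eigenvectorBasis i‖ = 1 := hH.eigenvectorBasis.orthonormal.1 i
  have hs : Real.sqrt (∑ j, ‖hH.eigenvectorBasis i j‖ ^ 2) = 1 := by
    rw [← EuclideanSpace.norm_eq]; exact h1
  have h0 : (0:ℝ) ≤ ∑ j, ‖hH.eigenvectorBasis i j‖ ^ 2 := by positivity
  have he : ∑ j, ‖hH.eigenvectorBasis i j‖ ^ 2 = 1 := by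
    nlinarith [Real.sq_sqrt h0]
  simpa [dotProduct, Real.norm_eq_abs, sq_abs, sq] using he

lemma eigenvalues_le_of_psd (hH : H.IsHermitian) {c : ℝ}
    (h : (c • (1 : Matrix n n ℝ) - H).PosSemidef) (i : n) : hH.eigenvalues i ≤ c := by
  set v : n → ℝ := ⇑(hH.eigenvectorBasis i) with hv
  have hev : H *ᵥ v = hH.eigenvalues i • v := hH.mulVec_eigenvectorBasis i
  have hnorm : v ⬝ᵥ v = 1 := eigBasis_dot_self hH i
  have h2 := h.dotProduct_mulVec_nonneg v
  simp only [star_trivial, sub_mulVec, smul_mulVec, one_mulVec, dotProduct_sub,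
    dotProduct_smul, smul_eq_mul, hev] at h2
  rw [hnorm] at h2
  linarith

lemma eigenvalues_ge_of_psd (hH : H.IsHermitian) {c : ℝ}
    (h : (H - c • (1 : Matrix n n ℝ)).PosSemidef) (i : n) : c ≤ hH.eigenvalues i := by
  set v : n → ℝ := ⇑(hH.eigenvectorBasis i) with hv
  have hev : H *ᵥ v = hH.eigenvalues i • v := hH.mulVec_eigenvectorBasis i
  have hnorm : v ⬝ᵥ v = 1 := eigBasis_dot_self hH i
  have h2 := h.dotProduct_mulVec_nonneg v
  simp only [star_trivial, sub_mulVec, smul_mulVec, one_mulVec, dotProduct_sub,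
    dotProduct_smul, smul_eq_mul, hev] at h2
  rw [hnorm] at h2
  linarith

lemma trace_eq_sum_eigenvalues (hH : H.IsHermitian) : H.trace = ∑ i, hH.eigenvalues i := by
  have hU2 : star (hH.eigenvectorUnitary : Matrix n n ℝ) * (hH.eigenvectorUnitary : Matrix n n ℝ)
      = 1 := mem_unitaryGroup_iff'.mp (hH.eigenvectorUnitary).2
  conv_lhs => rw [spectral_theorem_real hH]
  rw [trace_mul_cycle, hU2, one_mul, trace_diagonal]

end LQRaux2

section Aux3
open LQRaux LQRaux2

variable {m n : ℕ}

lemma eig_tms_nonneg (M : Matrix (Fin m) (Fin n) ℝ) (i : Fin n) :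
    0 ≤ (isHermitian_conjTranspose_mul_self M).eigenvalues i := by
  exact (posSemidef_conjTranspose_mul_self M).eigenvalues_nonneg i

lemma specNorm_nonneg' (M : Matrix (Fin m) (Fin n) ℝ) : 0 ≤ specNorm M := Real.sqrt_nonneg _

lemma dot_self_nonneg (x : Fin n → ℝ) : 0 ≤ x ⬝ᵥ x :=
  Finset.sum_nonneg fun i _ => mul_self_nonneg _

lemma sq_specNorm (M : Matrix (Fin m) (Fin n) ℝ) [Nonempty (Fin n)] :
    specNorm M ^ 2 = ⨆ i, (isHermitian_conjTranspose_mul_self M).eigenvalues i :=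
  Real.sq_sqrt (le_ciSup_of_le (Set.Finite.bddAbove (Set.finite_range _))
    (Classical.arbitrary _) (eig_tms_nonneg M _))

lemma quad_tms_le (M : Matrix (Fin m) (Fin n) ℝ) (x : Fin n → ℝ) :
    x ⬝ᵥ ((Mᴴ * M) *ᵥ x) ≤ specNorm M ^ 2 * (x ⬝ᵥ x) := by
  rcases isEmpty_or_nonempty (Fin n) with h | h
  · simp [dotProduct]
  · rw [sq_specNorm M]
    exact LQRaux2.quad_le (isHermitian_conjTranspose_mul_self M)
      (fun i => le_ciSup (Set.Finite.bddAbove (Set.finite_range _)) i) x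

lemma mulVec_dot_self (M : Matrix (Fin m) (Fin n) ℝ) (x : Fin n → ℝ) :
    (M *ᵥ x) ⬝ᵥ (M *ᵥ x) = x ⬝ᵥ ((Mᴴ * M) *ᵥ x) := by
  conv_rhs => rw [conjTranspose_eq_transpose_of_trivial, ← mulVec_mulVec, dot_mulVec_eq,
    transpose_transpose]

lemma mulVec_dot_le (M : Matrix (Fin m) (Fin n) ℝ) (x : Fin n → ℝ) :
    (M *ᵥ x) ⬝ᵥ (M *ᵥ x) ≤ specNorm M ^ 2 * (x ⬝ᵥ x) := by
  rw [mulVec_dot_self]; exact quad_tms_le M x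

lemma psd_specNorm_sq_sub_tms (M : Matrix (Fin m) (Fin n) ℝ) :
    ((specNorm M ^ 2) • (1 : Matrix (Fin n) (Fin n) ℝ) - Mᴴ * M).PosSemidef :=
  posSemidef_smul_one_sub (isHermitian_conjTranspose_mul_self M) (quad_tms_le M)

lemma psd_specNorm_smul_sub {G : Matrix (Fin n) (Fin n) ℝ} (hG : G.PosSemidef) :
    (specNorm G • (1 : Matrix (Fin n) (Fin n) ℝ) - G).PosSemidef := by
  apply posSemidef_smul_one_sub hG.1
  intro x
  have hCS : (x ⬝ᵥ (G *ᵥ x)) ^ 2 ≤ (x ⬝ᵥ x) * ((G *ᵥ x) ⬝ᵥ (G *ᵥ x)) := by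
    have h := Finset.sum_mul_sq_le_sq_mul_sq Finset.univ x (G *ᵥ x)
    simpa [dotProduct, sq] using h
  have h2 : (G *ᵥ x) ⬝ᵥ (G *ᵥ x) ≤ specNorm G ^ 2 * (x ⬝ᵥ x) := mulVec_dot_le G x
  have h3 : 0 ≤ x ⬝ᵥ (G *ᵥ x) := by have := hG.dotProduct_mulVec_nonneg x; simpa using this
  have h4 : 0 ≤ x ⬝ᵥ x := dot_self_nonneg x
  have h5 : 0 ≤ specNorm G := specNorm_nonneg' G
  nlinarith [mul_nonneg h5 h4]

lemma specNorm_le_trace {G : Matrix (Fin n) (Fin n) ℝ} (hG : G.PosSemidef) :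
    specNorm G ≤ G.trace := by
  rcases isEmpty_or_nonempty (Fin n) with h | h
  · have h1 : specNorm G = 0 := by
      unfold specNorm
      rw [Real.iSup_of_isEmpty, Real.sqrt_zero]
    have h2 : G.trace = 0 := by simp [Matrix.trace]
    rw [h1, h2]
  · set c := G.trace with hc
    have hc0 : 0 ≤ c := trace_nonneg_of_psd hG
    have heig : ∀ i, hG.1.eigenvalues i ≤ c := by
      intro i
      rw [hc, trace_eq_sum_eigenvalues hG.1]
      exact Finset.single_le_sum (fun j _ => hG.eigenvalues_nonneg j) (Finset.mem_univ i)
    have h2 : (c • (1 : Matrix (Fin n) (Fin n) ℝ) - G).PosSemidef :=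
      posSemidef_smul_one_sub hG.1 (LQRaux2.quad_le hG.1 heig)
    obtain ⟨s, hss⟩ : ∃ s : Matrix (Fin n) (Fin n) ℝ, s.PosSemidef ∧ s * s = G ∧
        s * (c • (1 : Matrix (Fin n) (Fin n) ℝ) - G) * s = hG.sqrt *
          (c • (1 : Matrix (Fin n) (Fin n) ℝ) - G) * hG.sqrt :=
      ⟨hG.sqrt, hG.posSemidef_sqrt, hG.sqrt_mul_self, rfl⟩
    obtain ⟨hspsd, hss, hrw⟩ := hss
    have e1 : hG.sqrt * (c • (1 : Matrix (Fin n) (Fin n) ℝ) - G) * hG.sqrt = c • G - G * G := by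
      rw [← hrw, mul_sub, sub_mul, mul_smul_comm, mul_one, smul_mul_assoc, hss]
      congr 1
      rw [← hss]
      simp only [mul_assoc]
    have e2 : (c ^ 2) • (1 : Matrix (Fin n) (Fin n) ℝ) - G * G =
        c • (c • (1 : Matrix (Fin n) (Fin n) ℝ) - G) +
          hG.sqrt * (c • (1 : Matrix (Fin n) (Fin n) ℝ) - G) * hG.sqrt := by
      rw [e1]
      module
    have hconj : (hG.sqrt * (c • (1 : Matrix (Fin n) (Fin n) ℝ) - G) * hG.sqrt).PosSemidef := by
      have := h2.mul_mul_conjTranspose_same hG.sqrt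
      rwa [hG.posSemidef_sqrt.1] at this
    have h3 : ((c ^ 2) • (1 : Matrix (Fin n) (Fin n) ℝ) - G * G).PosSemidef := by
      rw [e2]; exact (psd_smul h2 hc0).add hconj
    have hGt : Gᴴ * G = G * G := by rw [hG.1]
    have h4 : ∀ i, (isHermitian_conjTranspose_mul_self G).eigenvalues i ≤ c ^ 2 := by
      intro i
      apply eigenvalues_le_of_psd
      rw [hGt]
      exact h3
    have h5 : (⨆ i, (isHermitian_conjTranspose_mul_self G).eigenvalues i) ≤ c ^ 2 := ciSup_le h4
    calc specNorm G ≤ Real.sqrt (c ^ 2) := Real.sqrt_le_sqrt h5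
      _ = c := Real.sqrt_sq hc0

lemma psd_sub_sigmaMin_smul {G : Matrix (Fin n) (Fin n) ℝ} (hG : G.PosSemidef) :
    (G - sigmaMin G • (1 : Matrix (Fin n) (Fin n) ℝ)).PosSemidef := by
  rcases isEmpty_or_nonempty (Fin n) with h | h
  · exact posSemidef_of_isEmpty _
  · apply posSemidef_sub_smul_one hG.1
    apply LQRaux2.quad_ge hG.1
    intro i
    have hlam0 : 0 ≤ hG.1.eigenvalues i := hG.eigenvalues_nonneg i
    have hev : G *ᵥ ⇑(hG.1.eigenvectorBasis i) = hG.1.eigenvalues i • ⇑(hG.1.eigenvectorBasis i) :=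
      hG.1.mulVec_eigenvectorBasis i
    have hvv : (⇑(hG.1.eigenvectorBasis i) : Fin n → ℝ) ⬝ᵥ ⇑(hG.1.eigenvectorBasis i) = 1 :=
      eigBasis_dot_self hG.1 i
    have hq : (⇑(hG.1.eigenvectorBasis i) : Fin n → ℝ) ⬝ᵥ ((Gᴴ * G) *ᵥ ⇑(hG.1.eigenvectorBasis i))
        = hG.1.eigenvalues i ^ 2 := by
      rw [← mulVec_dot_self, hev, smul_dotProduct, dotProduct_smul, hvv]
      simp [sq]
    have hinf : (⨅ j, (isHermitian_conjTranspose_mul_self G).eigenvalues j)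
        ≤ hG.1.eigenvalues i ^ 2 := by
      have hquad := LQRaux2.quad_ge (isHermitian_conjTranspose_mul_self G)
        (fun j => ciInf_le (Set.Finite.bddBelow (Set.finite_range _)) j) ⇑(hG.1.eigenvectorBasis i)
      rw [hq, hvv, mul_one] at hquad
      exact hquad
    calc sigmaMin G ≤ Real.sqrt (hG.1.eigenvalues i ^ 2) := Real.sqrt_le_sqrt hinf
      _ = |hG.1.eigenvalues i| := Real.sqrt_sq_eq_abs _
      _ = hG.1.eigenvalues i := abs_of_nonneg hlam0

lemma sigmaMin_pos {Q : Matrix (Fin n) (Fin n) ℝ} (hQ : Q.PosDef) [Nonempty (Fin n)] :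
    0 < sigmaMin Q := by
  apply Real.sqrt_pos.mpr
  have hpos : ∀ i, 0 < (isHermitian_conjTranspose_mul_self Q).eigenvalues i := by
    intro i
    rcases lt_or_eq_of_le (eig_tms_nonneg Q i) with h | h
    · exact h
    · exfalso
      have hev : (Qᴴ * Q) *ᵥ ⇑((isHermitian_conjTranspose_mul_self Q).eigenvectorBasis i)
          = (isHermitian_conjTranspose_mul_self Q).eigenvalues i •
            ⇑((isHermitian_conjTranspose_mul_self Q).eigenvectorBasis i) :=
        (isHermitian_conjTranspose_mul_self Q).mulVec_eigenvectorBasis i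
      have hvv : (⇑((isHermitian_conjTranspose_mul_self Q).eigenvectorBasis i) : Fin n → ℝ) ⬝ᵥ
          ⇑((isHermitian_conjTranspose_mul_self Q).eigenvectorBasis i) = 1 :=
        eigBasis_dot_self _ i
      have hq : (Q *ᵥ ⇑((isHermitian_conjTranspose_mul_self Q).eigenvectorBasis i)) ⬝ᵥ
          (Q *ᵥ ⇑((isHermitian_conjTranspose_mul_self Q).eigenvectorBasis i)) = 0 := by
        rw [mulVec_dot_self, hev, dotProduct_smul, hvv, ← h]
        simp
      have hQv : Q *ᵥ ⇑((isHermitian_conjTranspose_mul_self Q).eigenvectorBasis i) = 0 := by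
        rwa [dotProduct_self_eq_zero] at hq
      have hvne : (⇑((isHermitian_conjTranspose_mul_self Q).eigenvectorBasis i) : Fin n → ℝ) ≠ 0 := by
        intro h0
        rw [h0] at hvv
        simp at hvv
      have hpd := hQ.dotProduct_mulVec_pos hvne
      rw [hQv] at hpd
      simp at hpd
  obtain ⟨i0, hi0⟩ := Finite.exists_min fun i => (isHermitian_conjTranspose_mul_self Q).eigenvalues i
  exact lt_of_lt_of_le (hpos i0) (le_ciInf hi0)

lemma eigenvalues_congr {N : Type*} [Fintype N] [DecidableEq N] {A B : Matrix N N ℝ} (h : A = B)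
    (hA : A.IsHermitian) (hB : B.IsHermitian) : hA.eigenvalues = hB.eigenvalues := by
  subst h; rfl

lemma specNorm_neg (M : Matrix (Fin m) (Fin n) ℝ) : specNorm (-M) = specNorm M := by
  unfold specNorm
  rw [eigenvalues_congr (show (-M)ᴴ * (-M) = Mᴴ * M by simp)
    (isHermitian_conjTranspose_mul_self _) (isHermitian_conjTranspose_mul_self _)]

lemma specNorm_of_isEmpty [IsEmpty (Fin n)] (M : Matrix (Fin m) (Fin n) ℝ) : specNorm M = 0 := by
  unfold specNorm
  rw [Real.iSup_of_isEmpty, Real.sqrt_zero]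

section Gelfand

attribute [local instance] Matrix.linftyOpNormedRing Matrix.linftyOpNormedAlgebra

lemma entry_norm_le_linfty {N : Type*} [Fintype N] [DecidableEq N] (X : Matrix N N ℂ) (i j : N) :
    ‖X i j‖ ≤ ‖X‖ := by
  have h1 : ‖X i j‖₊ ≤ ∑ j', ‖X i j'‖₊ :=
    Finset.single_le_sum (f := fun j' => ‖X i j'‖₊) (fun _ _ => zero_le) (Finset.mem_univ j)
  have h2 : (∑ j', ‖X i j'‖₊) ≤ Finset.univ.sup fun i' => ∑ j', ‖X i' j'‖₊ :=
    Finset.le_sup (f := fun i' => ∑ j', ‖X i' j'‖₊) (Finset.mem_univ i)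
  have h3 : ‖X‖₊ = Finset.univ.sup fun i' => ∑ j', ‖X i' j'‖₊ := Matrix.linfty_opNNNorm_def X
  have h4 : ‖X i j‖₊ ≤ ‖X‖₊ := by rw [h3]; exact le_trans h1 h2
  exact h4

lemma decay {d : ℕ} (hd : 0 < d) (M : Matrix (Fin d) (Fin d) ℝ) (hK : specRad M < 1) :
    ∃ c r : ℝ, 0 < c ∧ 0 < r ∧ r < 1 ∧ ∀ t, ∀ i j, |(M ^ t) i j| ≤ c * r ^ t := by
  haveI : Nonempty (Fin d) := ⟨⟨0, hd⟩⟩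
  haveI : CompleteSpace (Matrix (Fin d) (Fin d) ℂ) := FiniteDimensional.complete ℂ _
  set M' : Matrix (Fin d) (Fin d) ℂ := M.map (algebraMap ℝ ℂ) with hM'
  have hcpt : IsCompact (spectrum ℂ M') := spectrum.isCompact M'
  have hbdd : BddAbove (Set.range fun μ : spectrum ℂ M' => ‖(μ : ℂ)‖) := by
    have h := (hcpt.image continuous_norm).bddAbove
    have heq : (fun μ : spectrum ℂ M' => ‖(μ : ℂ)‖) =
        ((fun z : ℂ => ‖z‖) ∘ (fun μ : spectrum ℂ M' => (μ : ℂ))) := rfl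
    rw [heq, Set.range_comp, Subtype.range_coe]
    exact h
  have habs : ∀ z ∈ spectrum ℂ M', ‖z‖ ≤ specRad M := fun z hz =>
    le_ciSup hbdd (⟨z, hz⟩ : spectrum ℂ M')
  have h0 : 0 ≤ specRad M := by
    obtain ⟨z, hz⟩ := spectrum.nonempty M'
    exact le_trans (norm_nonneg z) (habs z hz)
  set rr : ℝ := (specRad M + 1) / 2 with hrr
  have hρr : specRad M < rr := by rw [hrr]; linarith
  have hr1 : rr < 1 := by rw [hrr]; linarith
  have hrpos : (0:ℝ) < rr := by rw [hrr]; linarith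
  set r : NNReal := ⟨rr, hrpos.le⟩ with hr
  have hsr : spectralRadius ℂ M' < (r : NNReal) := by
    apply spectrum.spectralRadius_lt_of_forall_lt M'
    intro z hz
    rw [← NNReal.coe_lt_coe]
    have hz1 : ‖z‖ = ‖z‖ := rfl
    rw [coe_nnnorm, hz1]
    exact lt_of_le_of_lt (habs z hz) hρr
  have htend := spectrum.pow_nnnorm_pow_one_div_tendsto_nhds_spectralRadius M'
  have hev : ∀ᶠ n : ℕ in Filter.atTop,
      ((‖M' ^ n‖₊ : ENNReal) ^ (1/(n:ℝ))) < ((r : NNReal) : ENNReal) :=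
    htend.eventually_lt_const hsr
  obtain ⟨N, hN⟩ := Filter.eventually_atTop.1 hev
  have hpow : ∀ n, max N 1 ≤ n → ‖M' ^ n‖ ≤ rr ^ n := by
    intro n hn
    have hn1 : (1:ℕ) ≤ n := le_trans (le_max_right _ _) hn
    have hne : ((n:ℝ)) ≠ 0 := by
      have : (0:ℝ) < (n:ℝ) := by exact_mod_cast hn1
      exact ne_of_gt this
    have h1 := (hN n (le_trans (le_max_left _ _) hn)).le
    have h2 := ENNReal.rpow_le_rpow h1 (Nat.cast_nonneg n : (0:ℝ) ≤ (n:ℝ))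
    rw [← ENNReal.rpow_mul (‖M' ^ n‖₊ : ENNReal) (1/(n:ℝ)) (n:ℝ), one_div,
      inv_mul_cancel₀ hne, ENNReal.rpow_one, ENNReal.rpow_natCast,
      ← ENNReal.coe_pow, ENNReal.coe_le_coe] at h2
    have h3 : (‖M' ^ n‖₊ : ℝ) ≤ ((r ^ n : NNReal) : ℝ) := NNReal.coe_le_coe.mpr h2
    rw [NNReal.coe_pow] at h3
    exact h3
  set c : ℝ := 1 + ∑ k ∈ Finset.range (max N 1), ‖M' ^ k‖ / rr ^ k with hc
  have hterm : ∀ k, 0 ≤ ‖M' ^ k‖ / rr ^ k := fun k =>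
    div_nonneg (norm_nonneg _) (pow_nonneg hrpos.le k)
  have hc1 : 1 ≤ c := by
    rw [hc]
    have : 0 ≤ ∑ k ∈ Finset.range (max N 1), ‖M' ^ k‖ / rr ^ k :=
      Finset.sum_nonneg fun k _ => hterm k
    linarith
  have hcpos : 0 < c := lt_of_lt_of_le one_pos hc1
  refine ⟨c, rr, hcpos, hrpos, hr1, ?_⟩
  intro t i j
  have hmap : M' ^ t = (M ^ t).map (algebraMap ℝ ℂ) := by
    rw [hM', ← RingHom.mapMatrix_apply, ← RingHom.mapMatrix_apply, map_pow]
  have hentry : |(M ^ t) i j| = ‖(M' ^ t) i j‖ := by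
    rw [hmap, Matrix.map_apply]
    simp [Complex.norm_real, Real.norm_eq_abs]
  have hbound : ‖M' ^ t‖ ≤ c * rr ^ t := by
    rcases le_or_gt (max N 1) t with h | h
    · have := hpow t h
      have h2 : rr ^ t ≤ c * rr ^ t := by
        nlinarith [pow_pos hrpos t]
      linarith
    · have hmem : t ∈ Finset.range (max N 1) := Finset.mem_range.mpr h
      have h1 : ‖M' ^ t‖ / rr ^ t ≤ ∑ k ∈ Finset.range (max N 1), ‖M' ^ k‖ / rr ^ k :=
        Finset.single_le_sum (fun k _ => hterm k) hmem
      have h2 : ‖M' ^ t‖ / rr ^ t ≤ c := by rw [hc]; linarith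
      have h3 := mul_le_mul_of_nonneg_right h2 (pow_nonneg hrpos.le t)
      rw [div_mul_cancel₀] at h3
      · exact h3
      · exact ne_of_gt (pow_pos hrpos t)
  calc |(M ^ t) i j| = ‖(M' ^ t) i j‖ := hentry
    _ ≤ ‖M' ^ t‖ := entry_norm_le_linfty _ i j
    _ ≤ c * rr ^ t := hbound

end Gelfand

section Series

lemma matrix_hasSum {a b : ℕ} {f : ℕ → Matrix (Fin a) (Fin b) ℝ} {g : Matrix (Fin a) (Fin b) ℝ}
    (h : ∀ i j, HasSum (fun t => f t i j) (g i j)) : HasSum f g :=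
  Pi.hasSum.mpr fun i => Pi.hasSum.mpr fun j => h i j

lemma matrix_summable {a b : ℕ} {f : ℕ → Matrix (Fin a) (Fin b) ℝ}
    (h : ∀ i j, Summable fun t => f t i j) : Summable f :=
  ⟨Matrix.of fun i j => ∑' t, f t i j, matrix_hasSum fun i j => (h i j).hasSum⟩

lemma summable_sandwich {a : ℕ} {L R : Matrix (Fin a) (Fin a) ℝ} (W : Matrix (Fin a) (Fin a) ℝ)
    {c r : ℝ} (hc : 0 < c) (hr0 : 0 < r) (hr1 : r < 1)
    (hL : ∀ t i j, |(L ^ t) i j| ≤ c * r ^ t) (hR : ∀ t i j, |(R ^ t) i j| ≤ c * r ^ t) :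
    Summable (fun t => L ^ t * W * R ^ t) := by
  apply matrix_summable
  intro i j
  set B : ℝ := (∑ p, ∑ q, |W p q|) * (c * c) with hB
  have hB0 : 0 ≤ ∑ p, ∑ q, |W p q| :=
    Finset.sum_nonneg fun p _ => Finset.sum_nonneg fun q _ => abs_nonneg _
  have hgeo : Summable (fun t : ℕ => B * (r ^ 2) ^ t) :=
    (summable_geometric_of_lt_one (by positivity) (by nlinarith)).mul_left B
  apply Summable.of_abs
  apply hgeo.of_nonneg_of_le (fun t => abs_nonneg _)
  intro t
  have e : (L ^ t * W * R ^ t) i j = ∑ p, ∑ q, (L ^ t) i p * W p q * (R ^ t) q j := by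
    rw [Matrix.mul_apply]
    simp_rw [Matrix.mul_apply, Finset.sum_mul]
    rw [Finset.sum_comm]
  rw [e]
  calc |∑ p, ∑ q, (L ^ t) i p * W p q * (R ^ t) q j|
      ≤ ∑ p, |∑ q, (L ^ t) i p * W p q * (R ^ t) q j| := Finset.abs_sum_le_sum_abs _ _
    _ ≤ ∑ p, ∑ q, |(L ^ t) i p * W p q * (R ^ t) q j| :=
        Finset.sum_le_sum fun p _ => Finset.abs_sum_le_sum_abs _ _
    _ ≤ ∑ p, ∑ q, |W p q| * (c * c * (r ^ 2) ^ t) := by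
        apply Finset.sum_le_sum
        intro p _
        apply Finset.sum_le_sum
        intro s _
        rw [abs_mul, abs_mul]
        have h1 := hL t i p
        have h2 := hR t s j
        have h3 : (0:ℝ) ≤ |W p s| := abs_nonneg _
        have hcr : (0:ℝ) < c * r ^ t := by positivity
        have key : |(L ^ t) i p| * |W p s| * |(R ^ t) s j| ≤
            (c * r ^ t) * |W p s| * (c * r ^ t) := by
          apply mul_le_mul
          · exact mul_le_mul_of_nonneg_right h1 h3
          · exact h2
          · exact abs_nonneg _
          · positivity
        calc |(L ^ t) i p| * |W p s| * |(R ^ t) s j|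
            ≤ (c * r ^ t) * |W p s| * (c * r ^ t) := key
          _ = |W p s| * (c * c * (r ^ 2) ^ t) := by ring
    _ = B * (r ^ 2) ^ t := by
        simp_rw [← Finset.sum_mul]
        rw [hB]; ring

lemma trace_cont {a : ℕ} : Continuous (fun X : Matrix (Fin a) (Fin a) ℝ => X.trace) :=
  continuous_finset_sum _ fun i _ => (continuous_apply i).comp (continuous_apply (A := fun _ : Fin a => Fin a → ℝ) i)

def quadHom {a : ℕ} (x : Fin a → ℝ) : Matrix (Fin a) (Fin a) ℝ →+ ℝ :=
  AddMonoidHom.mk' (fun X => x ⬝ᵥ (X *ᵥ x)) (by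
    intro X Y
    simp [Matrix.add_mulVec, dotProduct_add])

lemma quad_cont {a : ℕ} (x : Fin a → ℝ) :
    Continuous (fun X : Matrix (Fin a) (Fin a) ℝ => x ⬝ᵥ (X *ᵥ x)) :=
  continuous_const.dotProduct (continuous_id.matrix_mulVec continuous_const)

lemma psd_tsum {a : ℕ} {f : ℕ → Matrix (Fin a) (Fin a) ℝ} (hf : Summable f)
    (h : ∀ t, (f t).PosSemidef) : (∑' t, f t).PosSemidef := by
  refine Matrix.PosSemidef.of_dotProduct_mulVec_nonneg ?_ ?_
  · rw [Matrix.IsHermitian, Matrix.conjTranspose_tsum]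
    exact tsum_congr fun t => (h t).1
  · intro x
    have h1 : HasSum (fun t => x ⬝ᵥ (f t *ᵥ x)) (x ⬝ᵥ ((∑' t, f t) *ᵥ x)) :=
      hf.hasSum.map (quadHom x) (quad_cont x)
    rw [star_trivial, ← h1.tsum_eq]
    exact tsum_nonneg fun t => by have := (h t).dotProduct_mulVec_nonneg x; simpa using this

end Series


end Aux3

open LQRaux LQRaux2 in
/-- Finite-horizon approximation of `Σ_K` and `C(K)`. -/
theorem finite_horizon_approximation {d k : ℕ}
    (A : Matrix (Fin d) (Fin d) ℝ) (B : Matrix (Fin d) (Fin k) ℝ)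
    (Q : Matrix (Fin d) (Fin d) ℝ) (R : Matrix (Fin k) (Fin k) ℝ)
    (Sig0 : Matrix (Fin d) (Fin d) ℝ)
    (hQ : Q.PosDef) (hR : R.PosDef) (hSig0 : Sig0.PosSemidef)
    (hmu : 0 < sigmaMin Sig0)
    (K : Matrix (Fin k) (Fin d) ℝ) (hK : specRad (A - B * K) < 1)
    (l : ℕ) (hl : 0 < l) (ε : ℝ) (hε : 0 < ε) :
    ((d : ℝ) * Cost A B Q R Sig0 K ^ 2 / (ε * sigmaMin Sig0 * sigmaMin Q ^ 2) ≤ l →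
      specNorm ((∑ t ∈ Finset.range l, (A - B * K) ^ t * Sig0 * ((A - B * K)ᵀ) ^ t) -
          SigmaMat A B Sig0 K) ≤ ε) ∧
    ((d : ℝ) * Cost A B Q R Sig0 K ^ 2 *
          (specNorm Q + specNorm R * specNorm K ^ 2) /
          (ε * sigmaMin Sig0 * sigmaMin Q ^ 2) ≤ l →
      ((∑ t ∈ Finset.range l, (A - B * K) ^ t * Sig0 * ((A - B * K)ᵀ) ^ t) *
          (Q + Kᵀ * R * K)).trace ≤ Cost A B Q R Sig0 K ∧
      Cost A B Q R Sig0 K - ε ≤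
        ((∑ t ∈ Finset.range l, (A - B * K) ^ t * Sig0 * ((A - B * K)ᵀ) ^ t) *
          (Q + Kᵀ * R * K)).trace) := by
  rcases Nat.eq_zero_or_pos d with hd0 | hd
  · subst hd0
    have htr0 : ∀ X : Matrix (Fin 0) (Fin 0) ℝ, X.trace = 0 := fun X => by
      simp [Matrix.trace]
    have hCost0 : Cost A B Q R Sig0 K = 0 := htr0 _
    refine ⟨fun _ => ?_, fun _ => ⟨?_, ?_⟩⟩
    · rw [specNorm_of_isEmpty]; exact hε.le
    · rw [htr0, hCost0]
    · rw [htr0, hCost0]; linarith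
  · -- main case
    haveI : Nonempty (Fin d) := ⟨⟨0, hd⟩⟩
    set M : Matrix (Fin d) (Fin d) ℝ := A - B * K with hM
    set Nm : Matrix (Fin d) (Fin d) ℝ := Q + Kᵀ * R * K with hNm
    set q : ℝ := sigmaMin Q with hq
    set μ : ℝ := sigmaMin Sig0 with hmuv
    set C : ℝ := Cost A B Q R Sig0 K with hC
    obtain ⟨c, r, hc, hr0, hr1, hdecay⟩ := decay hd M hK
    have hdecayT : ∀ t i j, |((Mᵀ) ^ t) i j| ≤ c * r ^ t := by
      intro t i j
      rw [← Matrix.transpose_pow, Matrix.transpose_apply]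
      exact hdecay t j i
    set S : ℕ → Matrix (Fin d) (Fin d) ℝ := fun t => M ^ t * Sig0 * (Mᵀ) ^ t with hSdef
    set P : ℕ → Matrix (Fin d) (Fin d) ℝ := fun t => (Mᵀ) ^ t * Nm * M ^ t with hPdef
    have hSsum : Summable S := summable_sandwich Sig0 hc hr0 hr1 hdecay hdecayT
    have hPsum : Summable P := summable_sandwich Nm hc hr0 hr1 hdecayT hdecay
    have hSpsd : ∀ t, (S t).PosSemidef := by
      intro t
      have h := hSig0.mul_mul_conjTranspose_same (M ^ t)
      rwa [conjTranspose_eq_transpose_of_trivial, Matrix.transpose_pow] at h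
    have hKRK : (Kᵀ * R * K).PosSemidef := by
      have h := hR.posSemidef.conjTranspose_mul_mul_same K
      rwa [conjTranspose_eq_transpose_of_trivial] at h
    have hNpsd : Nm.PosSemidef := hQ.posSemidef.add hKRK
    have hqpos : 0 < q := sigmaMin_pos hQ
    have hNq : (Nm - q • (1 : Matrix (Fin d) (Fin d) ℝ)).PosSemidef := by
      have h1 : (Q - q • (1 : Matrix (Fin d) (Fin d) ℝ)).PosSemidef :=
        psd_sub_sigmaMin_smul hQ.posSemidef
      have h2 : Nm - q • (1 : Matrix (Fin d) (Fin d) ℝ) =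
          (Q - q • (1 : Matrix (Fin d) (Fin d) ℝ)) + Kᵀ * R * K := by
        rw [hNm]; abel
      rw [h2]; exact h1.add hKRK
    have hSig0μ : (Sig0 - μ • (1 : Matrix (Fin d) (Fin d) ℝ)).PosSemidef :=
      psd_sub_sigmaMin_smul hSig0
    -- basic positivity
    have hτ0 : ∀ t, 0 ≤ (S t).trace := fun t => trace_nonneg_of_psd (hSpsd t)
    have ha0 : ∀ t, 0 ≤ (S t * Nm).trace := fun t => trace_mul_nonneg (hSpsd t) hNpsd
    have hqτa : ∀ t, q * (S t).trace ≤ (S t * Nm).trace := fun t =>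
      trace_mul_ge_of_psd (hSpsd t) hNq
    -- summability of traces
    have hτsum : Summable (fun t => (S t).trace) :=
      hSsum.map (Matrix.traceAddMonoidHom (Fin d) ℝ) trace_cont
    have hasum : Summable (fun t => (S t * Nm).trace) := by
      have hcontm : Continuous fun X : Matrix (Fin d) (Fin d) ℝ => X * Nm :=
        continuous_id.matrix_mul continuous_const
      have h1 : Summable (fun t => S t * Nm) := hSsum.map (AddMonoidHom.mulRight Nm) hcontm
      exact h1.map (Matrix.traceAddMonoidHom (Fin d) ℝ) trace_cont
    -- Cost identity
    have hCost : C = ∑' t, (S t * Nm).trace := by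
      have hPmat : Pmat A B Q R K = ∑' t, P t := rfl
      have hcont : Continuous fun X : Matrix (Fin d) (Fin d) ℝ => Sig0 * X :=
        continuous_const.matrix_mul continuous_id
      have h1 : HasSum (fun t => Sig0 * P t) (Sig0 * Pmat A B Q R K) := by
        rw [hPmat]
        exact hPsum.hasSum.map (AddMonoidHom.mulLeft Sig0) hcont
      have h2 : HasSum (fun t => (Sig0 * P t).trace) C :=
        h1.map (Matrix.traceAddMonoidHom (Fin d) ℝ) trace_cont
      rw [← h2.tsum_eq]
      apply tsum_congr
      intro t
      show (Sig0 * ((Mᵀ) ^ t * Nm * M ^ t)).trace = ((M ^ t * Sig0 * (Mᵀ) ^ t) * Nm).trace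
      rw [show Sig0 * ((Mᵀ) ^ t * Nm * M ^ t) = (Sig0 * (Mᵀ) ^ t * Nm) * M ^ t by
        simp only [mul_assoc], trace_mul_comm,
        show M ^ t * (Sig0 * (Mᵀ) ^ t * Nm) = (M ^ t * Sig0 * (Mᵀ) ^ t) * Nm by
        simp only [mul_assoc]]
    set T : ℝ := ∑' t, (S t).trace with hT
    have hT0 : 0 ≤ T := tsum_nonneg hτ0
    have hqT : q * T ≤ C := by
      rw [hCost, hT, ← tsum_mul_left]
      exact Summable.tsum_le_tsum hqτa (hτsum.mul_left q) hasum
    have hC0 : 0 ≤ C := by rw [hCost]; exact tsum_nonneg ha0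
    -- submultiplicativity
    have hsub : ∀ s t, μ * (S (s + t)).trace ≤ (S s).trace * (S t).trace := by
      intro s t
      have hWpsd : ((Mᵀ) ^ s * M ^ s).PosSemidef := by
        have h := posSemidef_conjTranspose_mul_self (M ^ s)
        rwa [conjTranspose_eq_transpose_of_trivial, Matrix.transpose_pow] at h
      have hident : S (s + t) = M ^ s * S t * (Mᵀ) ^ s := by
        show M ^ (s + t) * Sig0 * (Mᵀ) ^ (s + t) = M ^ s * (M ^ t * Sig0 * (Mᵀ) ^ t) * (Mᵀ) ^ s
        rw [pow_add, show (Mᵀ) ^ (s + t) = (Mᵀ) ^ t * (Mᵀ) ^ s by rw [← pow_add, add_comm]]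
        simp only [mul_assoc]
      have h1 : (S (s + t)).trace = (S t * ((Mᵀ) ^ s * M ^ s)).trace := by
        rw [hident, show M ^ s * S t * (Mᵀ) ^ s = M ^ s * (S t * (Mᵀ) ^ s) by
          simp only [mul_assoc], trace_mul_comm, mul_assoc]
      have htrW : ((Mᵀ) ^ s * M ^ s).trace = (M ^ s * (Mᵀ) ^ s).trace := trace_mul_comm _ _
      have hμW : μ * (M ^ s * (Mᵀ) ^ s).trace ≤ (S s).trace := by
        have hpsd2 : (M ^ s * (Sig0 - μ • (1 : Matrix (Fin d) (Fin d) ℝ)) * (Mᵀ) ^ s).PosSemidef := by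
          have h := hSig0μ.mul_mul_conjTranspose_same (M ^ s)
          rwa [conjTranspose_eq_transpose_of_trivial, Matrix.transpose_pow] at h
        have h3 := trace_nonneg_of_psd hpsd2
        have hexp : M ^ s * (Sig0 - μ • (1 : Matrix (Fin d) (Fin d) ℝ)) * (Mᵀ) ^ s
            = S s - μ • (M ^ s * (Mᵀ) ^ s) := by
          show M ^ s * (Sig0 - μ • (1 : Matrix (Fin d) (Fin d) ℝ)) * (Mᵀ) ^ s
            = M ^ s * Sig0 * (Mᵀ) ^ s - μ • (M ^ s * (Mᵀ) ^ s)
          rw [mul_sub, sub_mul, mul_smul_comm, mul_one, smul_mul_assoc]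
        rw [hexp, trace_sub, trace_smul, smul_eq_mul] at h3
        linarith
      have hle : (S t * ((Mᵀ) ^ s * M ^ s)).trace ≤ ((Mᵀ) ^ s * M ^ s).trace * (S t).trace := by
        have hsmul : (((Mᵀ) ^ s * M ^ s).trace • (1 : Matrix (Fin d) (Fin d) ℝ)
            - (Mᵀ) ^ s * M ^ s).PosSemidef := by
          apply posSemidef_smul_one_sub hWpsd.1
          apply LQRaux2.quad_le hWpsd.1
          intro i
          rw [trace_eq_sum_eigenvalues hWpsd.1]
          exact Finset.single_le_sum (fun j _ => hWpsd.eigenvalues_nonneg j) (Finset.mem_univ i)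
        exact trace_mul_le_of_psd (hSpsd t) hsmul
      calc μ * (S (s + t)).trace = μ * (S t * ((Mᵀ) ^ s * M ^ s)).trace := by rw [h1]
        _ ≤ μ * (((Mᵀ) ^ s * M ^ s).trace * (S t).trace) :=
            mul_le_mul_of_nonneg_left hle hmu.le
        _ = (μ * (M ^ s * (Mᵀ) ^ s).trace) * (S t).trace := by rw [htrW]; ring
        _ ≤ (S s).trace * (S t).trace := mul_le_mul_of_nonneg_right hμW (hτ0 t)
    -- pigeonhole
    obtain ⟨t0, ht0mem, ht0min⟩ := Finset.exists_min_image (Finset.range l)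
      (fun t => (S t).trace) ⟨0, Finset.mem_range.mpr hl⟩
    have hτt0 : (l : ℝ) * (S t0).trace ≤ T := by
      have h1 : ∑ t ∈ Finset.range l, (S t0).trace ≤ ∑ t ∈ Finset.range l, (S t).trace :=
        Finset.sum_le_sum fun t ht => ht0min t ht
      rw [Finset.sum_const, Finset.card_range, nsmul_eq_mul] at h1
      have h2 : ∑ t ∈ Finset.range l, (S t).trace ≤ T :=
        Summable.sum_le_tsum _ (fun t _ => hτ0 t) hτsum
      linarith
    have ht0l : t0 ≤ l := (Finset.mem_range.mp ht0mem).le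
    set tt : ℝ := ∑' t, (S (t + l)).trace with htt
    have htail_le : ∀ m : ℕ, (∑' t, (S (t + m)).trace) ≤ T := by
      intro m
      have h1 := Summable.sum_add_tsum_nat_add m hτsum
      have hpart : 0 ≤ ∑ t ∈ Finset.range m, (S t).trace :=
        Finset.sum_nonneg fun t _ => hτ0 t
      rw [hT]; linarith
    have htt0 : 0 ≤ tt := tsum_nonneg fun t => hτ0 _
    have httle : μ * tt ≤ (S t0).trace * T := by
      have hshiftl : Summable fun t => (S (t + l)).trace :=
        (summable_nat_add_iff (f := fun t => (S t).trace) l).mpr hτsum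
      have hshift2 : Summable fun t => (S (t + (l - t0))).trace :=
        (summable_nat_add_iff (f := fun t => (S t).trace) (l - t0)).mpr hτsum
      have hbound : ∀ t, μ * (S (t + l)).trace ≤ (S t0).trace * (S (t + (l - t0))).trace := by
        intro t
        have he : t + l = t0 + (t + (l - t0)) := by omega
        rw [he]
        exact hsub t0 (t + (l - t0))
      have h1 : (∑' t, μ * (S (t + l)).trace) ≤ ∑' t, (S t0).trace * (S (t + (l - t0))).trace :=
        Summable.tsum_le_tsum hbound (hshiftl.mul_left μ) (hshift2.mul_left ((S t0).trace))
      rw [tsum_mul_left, tsum_mul_left] at h1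
      have h2 : (S t0).trace * (∑' t, (S (t + (l - t0))).trace) ≤ (S t0).trace * T :=
        mul_le_mul_of_nonneg_left (htail_le _) (hτ0 t0)
      rw [htt]; linarith
    have hlR : (0:ℝ) < (l:ℝ) := by exact_mod_cast hl
    have hkey : (l : ℝ) * (μ * tt) * q ^ 2 ≤ C ^ 2 := by
      have h1 : (l : ℝ) * (μ * tt) ≤ T ^ 2 := by
        nlinarith [mul_le_mul_of_nonneg_left httle hlR.le,
          mul_le_mul_of_nonneg_right hτt0 hT0]
      nlinarith [mul_le_mul_of_nonneg_left h1 (sq_nonneg q),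
        mul_self_le_mul_self (mul_nonneg hqpos.le hT0) hqT]
    have hd1 : (1:ℝ) ≤ (d:ℝ) := by exact_mod_cast hd
    have hden : 0 < ε * μ * q ^ 2 := by
      apply mul_pos (mul_pos hε hmu)
      exact pow_pos hqpos 2
    have hfac : 0 < (l:ℝ) * μ * q ^ 2 := by
      apply mul_pos (mul_pos hlR hmu)
      exact pow_pos hqpos 2
    -- tail matrix facts
    have hDsum : Summable fun t => S (t + l) := (summable_nat_add_iff (f := S) l).mpr hSsum
    have hDpsd : (∑' t, S (t + l)).PosSemidef := psd_tsum hDsum fun t => hSpsd _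
    have hDtr : (∑' t, S (t + l)).trace = tt := by
      rw [htt]
      exact (hDsum.hasSum.map (Matrix.traceAddMonoidHom (Fin d) ℝ) trace_cont).tsum_eq.symm
    have hDid : SigmaMat A B Sig0 K - (∑ t ∈ Finset.range l, M ^ t * Sig0 * (Mᵀ) ^ t)
        = ∑' t, S (t + l) := by
      have h2 : SigmaMat A B Sig0 K = ∑' t, S t := rfl
      have h1 := Summable.sum_add_tsum_nat_add l hSsum
      have hpart : (∑ t ∈ Finset.range l, M ^ t * Sig0 * (Mᵀ) ^ t)
          = ∑ t ∈ Finset.range l, S t := rfl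
      rw [h2, ← h1, hpart]
      abel
    constructor
    · -- part (i)
      intro hyp
      have hyp' : (d:ℝ) * C ^ 2 ≤ (l:ℝ) * (ε * μ * q ^ 2) := (div_le_iff₀ hden).mp hyp
      have htteps : tt ≤ ε := by
        have h6 : ((l:ℝ) * μ * q ^ 2) * tt ≤ ((l:ℝ) * μ * q ^ 2) * ε := by
          have hC2d : C ^ 2 ≤ (l:ℝ) * (ε * μ * q ^ 2) := by
            nlinarith [mul_nonneg (sub_nonneg.mpr hd1) (sq_nonneg C)]
          nlinarith [hkey]
        exact le_of_mul_le_mul_left h6 hfac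
      have hgoal : (∑ t ∈ Finset.range l, M ^ t * Sig0 * (Mᵀ) ^ t) - SigmaMat A B Sig0 K
          = -(∑' t, S (t + l)) := by rw [← hDid, neg_sub]
      rw [hgoal, specNorm_neg]
      calc specNorm (∑' t, S (t + l)) ≤ (∑' t, S (t + l)).trace := specNorm_le_trace hDpsd
        _ = tt := hDtr
        _ ≤ ε := htteps
    · -- part (ii)
      intro hyp
      have hCl : ((∑ t ∈ Finset.range l, M ^ t * Sig0 * (Mᵀ) ^ t) * Nm).trace
          = ∑ t ∈ Finset.range l, (S t * Nm).trace := by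
        rw [Finset.sum_mul, trace_sum]
      have hsplit := Summable.sum_add_tsum_nat_add l hasum
      have htailA0 : 0 ≤ ∑' t, (S (t + l) * Nm).trace := tsum_nonneg fun t => ha0 _
      have hshifta : Summable fun t => (S (t + l) * Nm).trace :=
        (summable_nat_add_iff (f := fun t => (S t * Nm).trace) l).mpr hasum
      have hshiftτ : Summable fun t => (S (t + l)).trace :=
        (summable_nat_add_iff (f := fun t => (S t).trace) l).mpr hτsum
      constructor
      · rw [hCl, hCost]
        have := Summable.sum_add_tsum_nat_add l hasum
        linarith
      · set β : ℝ := specNorm Q + specNorm R * specNorm K ^ 2 with hβ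
        have hβ0 : 0 ≤ β := by
          rw [hβ]
          have := specNorm_nonneg' Q
          have := specNorm_nonneg' R
          have := specNorm_nonneg' K
          positivity
        have hNβ : (β • (1 : Matrix (Fin d) (Fin d) ℝ) - Nm).PosSemidef := by
          have h1 : (specNorm Q • (1 : Matrix (Fin d) (Fin d) ℝ) - Q).PosSemidef :=
            psd_specNorm_smul_sub hQ.posSemidef
          have h3 : (specNorm R • (1 : Matrix (Fin k) (Fin k) ℝ) - R).PosSemidef :=
            psd_specNorm_smul_sub hR.posSemidef
          have h4 : (Kᵀ * (specNorm R • (1 : Matrix (Fin k) (Fin k) ℝ) - R) * K).PosSemidef := by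
            have h := h3.conjTranspose_mul_mul_same K
            rwa [conjTranspose_eq_transpose_of_trivial] at h
          have h5 : ((specNorm R) • ((specNorm K ^ 2) • (1 : Matrix (Fin d) (Fin d) ℝ)
              - Kᵀ * K)).PosSemidef := by
            apply psd_smul _ (specNorm_nonneg' R)
            have h := psd_specNorm_sq_sub_tms K
            rwa [conjTranspose_eq_transpose_of_trivial] at h
          have hexpand : (specNorm R * specNorm K ^ 2) • (1 : Matrix (Fin d) (Fin d) ℝ)
              - Kᵀ * R * K
              = (specNorm R) • ((specNorm K ^ 2) • (1 : Matrix (Fin d) (Fin d) ℝ) - Kᵀ * K)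
                + Kᵀ * (specNorm R • (1 : Matrix (Fin k) (Fin k) ℝ) - R) * K := by
            have e : Kᵀ * (specNorm R • (1 : Matrix (Fin k) (Fin k) ℝ)) * K
                = specNorm R • (Kᵀ * K) := by
              rw [Matrix.mul_smul, Matrix.mul_one, Matrix.smul_mul]
            rw [Matrix.mul_sub, Matrix.sub_mul, e, smul_sub, smul_smul]
            abel
          have hsum2 : β • (1 : Matrix (Fin d) (Fin d) ℝ) - Nm
              = (specNorm Q • (1 : Matrix (Fin d) (Fin d) ℝ) - Q)
                + ((specNorm R * specNorm K ^ 2) • (1 : Matrix (Fin d) (Fin d) ℝ)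
                  - Kᵀ * R * K) := by
            rw [hβ, hNm, add_smul]; abel
          rw [hsum2, hexpand]
          exact h1.add (h5.add h4)
        have htailA : (∑' t, (S (t + l) * Nm).trace) ≤ β * tt := by
          have h1 : ∀ t, (S (t + l) * Nm).trace ≤ β * (S (t + l)).trace := fun t =>
            trace_mul_le_of_psd (hSpsd (t + l)) hNβ
          have h2 := Summable.tsum_le_tsum h1 hshifta (hshiftτ.mul_left β)
          rwa [tsum_mul_left, ← htt] at h2
        have hyp' : (d:ℝ) * C ^ 2 * β ≤ (l:ℝ) * (ε * μ * q ^ 2) := (div_le_iff₀ hden).mp hyp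
        have hβtteps : β * tt ≤ ε := by
          have h6 : ((l:ℝ) * μ * q ^ 2) * (β * tt) ≤ ((l:ℝ) * μ * q ^ 2) * ε := by
            have h7 : (l:ℝ) * (μ * tt) * q ^ 2 * β ≤ C ^ 2 * β :=
              mul_le_mul_of_nonneg_right hkey hβ0
            have h8 : C ^ 2 * β ≤ (l:ℝ) * (ε * μ * q ^ 2) := by
              nlinarith [mul_nonneg (mul_nonneg (sub_nonneg.mpr hd1) (sq_nonneg C)) hβ0]
            nlinarith
          exact le_of_mul_le_mul_left h6 hfac
        rw [hCl, hCost]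
        linarith
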